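/- arXiv:1905.13583 — 4 statements merged into one kernel-verified Lean document; each statement's English description precedes it below -/
import Mathlib

section
/- An Archimedean vector lattice X (over the reals) is finite-dimensional if and only if every net in X that is unbounded order convergent (uo-convergent) to some element of X is eventually order bounded in X. -/
/-!
If `X` contains a sequence `dₙ` of pairwise disjoint positive elements, the net `(n, m) ↦ m • dₙ`
(ordered lexicographically) is uo-null, because in an Archimedean lattice the positive part of
any lower bound of its eventual upper bounds is disjoint from all `m • dₙ ⊓ u`, hence from itself;
yet no tail of the net is order bounded. If there is no such sequence, a maximal disjoint family
of atoms is finite and every `x ≥ 0` is the sum `∑ a, atomCoeff a x • a` of its components along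
the atoms, so `X` is finite-dimensional. Conversely, disjoint positive elements are linearly
independent, so in finite dimension this atomic decomposition exists. Its strong unit `e = ∑ a`
bounds uo-convergent nets: a net decreasing to `0` eventually drops below `e / 2` coordinatewise,
and `|x α - l| ⊓ e ≤ e / 2` forces `|x α - l| ≤ e / 2`.
-/

/-- A net `x : ι → X` (indexed by a preordered set `ι`) *order converges* (`o`-converges)
to `l ∈ X` if there is a net `y : Γ → X` over a nonempty directed set `Γ` which decreases
to `0` (i.e. `y` is antitone and `inf_γ y γ = 0`) such that for every `γ` there is an index
`α₀` with `|x α - l| ≤ y γ` for all `α ≥ α₀`. -/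
def OConvergesTo {X : Type u} [Lattice X] [AddCommGroup X]
    {ι : Type v} [Preorder ι] (x : ι → X) (l : X) : Prop :=
  ∃ (Γ : Type u) (_ : Preorder Γ) (_ : Nonempty Γ),
    IsDirected Γ (· ≤ ·) ∧
    ∃ y : Γ → X, Antitone y ∧ IsGLB (Set.range y) 0 ∧
      ∀ γ : Γ, ∃ α₀ : ι, ∀ α : ι, α₀ ≤ α → |x α - l| ≤ y γ

/-- A net `x : ι → X` is *unbounded order convergent* (`uo`-convergent) to `l ∈ X` if
`|x α - l| ⊓ y` order converges to `0` for every `y ≥ 0`. -/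
def UOConvergesTo {X : Type u} [Lattice X] [AddCommGroup X]
    {ι : Type v} [Preorder ι] (x : ι → X) (l : X) : Prop :=
  ∀ y : X, 0 ≤ y → OConvergesTo (fun α => |x α - l| ⊓ y) (0 : X)

/-- A net `x : ι → X` is *eventually order bounded* if there are `α₀ ∈ ι` and `b ∈ X`
with `|x α| ≤ b` for all `α ≥ α₀`. -/
def EventuallyOrderBounded {X : Type u} [Lattice X] [AddCommGroup X]
    {ι : Type v} [Preorder ι] (x : ι → X) : Prop :=
  ∃ (α₀ : ι) (b : X), ∀ α : ι, α₀ ≤ α → |x α| ≤ b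

/-- A vector lattice is *Archimedean* if `n • x ≤ y` for all `n : ℕ` implies `x ≤ 0`. -/
def ArchimedeanVL (X : Type u) [Lattice X] [AddCommGroup X] : Prop :=
  ∀ x y : X, (∀ n : ℕ, n • x ≤ y) → x ≤ 0

section LatticeOrderedGroup

variable {X : Type*} [AddCommGroup X] [Lattice X]

theorem inf_eq_zero_of_le_of_le {a b a' b' : X} (hab : a ⊓ b = 0) (ha' : 0 ≤ a') (hb' : 0 ≤ b')
    (haa' : a' ≤ a) (hbb' : b' ≤ b) : a' ⊓ b' = 0 :=
  le_antisymm (hab ▸ inf_le_inf haa' hbb') (le_inf ha' hb')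

variable [IsOrderedAddMonoid X]

theorem inf_add_le_inf_add_inf {a b c : X} (ha : 0 ≤ a) (hb : 0 ≤ b) (hc : 0 ≤ c) :
    a ⊓ (b + c) ≤ a ⊓ b + a ⊓ c := by
  rw [inf_add, add_inf, add_inf]
  refine le_inf (le_inf ?_ ?_) (le_inf ?_ ?_)
  · exact inf_le_left.trans (le_add_of_nonneg_right ha)
  · exact inf_le_left.trans (le_add_of_nonneg_right hc)
  · exact inf_le_left.trans (le_add_of_nonneg_left hb)
  · exact inf_le_right

theorem inf_nsmul_le_nsmul_inf {a b : X} (ha : 0 ≤ a) (hb : 0 ≤ b) (n : ℕ) :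
    a ⊓ n • b ≤ n • (a ⊓ b) := by
  induction n with
  | zero => simp
  | succ n ih =>
    calc a ⊓ (n + 1) • b = a ⊓ (n • b + b) := by rw [succ_nsmul]
      _ ≤ a ⊓ n • b + a ⊓ b := inf_add_le_inf_add_inf ha (nsmul_nonneg hb n) hb
      _ ≤ n • (a ⊓ b) + a ⊓ b := add_le_add_left ih _
      _ = (n + 1) • (a ⊓ b) := (succ_nsmul _ _).symm

theorem inf_nsmul_eq_zero {a b : X} (ha : 0 ≤ a) (hb : 0 ≤ b) (hab : a ⊓ b = 0) (n : ℕ) :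
    a ⊓ n • b = 0 :=
  le_antisymm (by simpa [hab] using inf_nsmul_le_nsmul_inf ha hb n) (le_inf ha (nsmul_nonneg hb n))

theorem nsmul_inf_nsmul_eq_zero {a b : X} (ha : 0 ≤ a) (hb : 0 ≤ b) (hab : a ⊓ b = 0)
    (m n : ℕ) : m • a ⊓ n • b = 0 := by
  have hna : n • b ⊓ a = 0 := by rw [inf_comm]; exact inf_nsmul_eq_zero ha hb hab n
  rw [inf_comm]
  exact inf_nsmul_eq_zero (nsmul_nonneg hb n) ha hna m

theorem inf_sum_le_sum_inf {ι : Type*} {a : X} {f : ι → X} (s : Finset ι) (ha : 0 ≤ a)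
    (hf : ∀ i ∈ s, 0 ≤ f i) : a ⊓ ∑ i ∈ s, f i ≤ ∑ i ∈ s, a ⊓ f i := by
  classical
  induction s using Finset.induction with
  | empty => simp
  | insert j s hj ih =>
    rw [Finset.sum_insert hj, Finset.sum_insert hj]
    have hs : ∀ i ∈ s, 0 ≤ f i := fun i hi => hf i (Finset.mem_insert_of_mem hi)
    calc a ⊓ (f j + ∑ i ∈ s, f i) ≤ a ⊓ f j + a ⊓ ∑ i ∈ s, f i :=
          inf_add_le_inf_add_inf ha (hf j (Finset.mem_insert_self j s)) (Finset.sum_nonneg hs)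
      _ ≤ a ⊓ f j + ∑ i ∈ s, a ⊓ f i := add_le_add_right (ih hs) _

theorem inf_sum_eq_zero {ι : Type*} {a : X} {f : ι → X} (s : Finset ι) (ha : 0 ≤ a)
    (hf : ∀ i ∈ s, 0 ≤ f i) (h : ∀ i ∈ s, a ⊓ f i = 0) : a ⊓ ∑ i ∈ s, f i = 0 :=
  le_antisymm ((inf_sum_le_sum_inf s ha hf).trans_eq (Finset.sum_eq_zero h))
    (le_inf ha (Finset.sum_nonneg hf))

theorem sum_le_of_pairwise_inf_eq_zero {ι : Type*} {x : X} {f : ι → X} (s : Finset ι)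
    (hx : 0 ≤ x) (hf : ∀ i ∈ s, 0 ≤ f i) (hfx : ∀ i ∈ s, f i ≤ x)
    (hdisj : (s : Set ι).Pairwise fun i j => f i ⊓ f j = 0) : ∑ i ∈ s, f i ≤ x := by
  classical
  induction s using Finset.induction with
  | empty => simpa using hx
  | insert j s hj ih =>
    have hs : ∀ i ∈ s, 0 ≤ f i := fun i hi => hf i (Finset.mem_insert_of_mem hi)
    have hj_disj : f j ⊓ ∑ i ∈ s, f i = 0 :=
      inf_sum_eq_zero s (hf j (Finset.mem_insert_self j s)) hs fun i hi =>
        hdisj (by simp) (by simp [hi]) (by rintro rfl; exact hj hi)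
    rw [Finset.sum_insert hj, ← inf_add_sup, hj_disj, zero_add]
    exact sup_le (hfx j (Finset.mem_insert_self j s))
      (ih hs (fun i hi => hfx i (Finset.mem_insert_of_mem hi))
        (hdisj.mono (by simp)))

theorem le_posPart_sub_of_inf_eq_zero {p q u : X} (hpq : p ⊓ q = 0) (hpu : p ≤ u) :
    p ≤ (u - q)⁺ :=
  calc p = (p - q) ⊔ (p - p) := by rw [← sub_inf, inf_comm, hpq, sub_zero]
    _ ≤ (u - q)⁺ := by rw [sub_self, posPart_def]; exact sup_le_sup_right (sub_le_sub_right hpu q) 0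

theorem le_of_inf_two_nsmul_le {z c : X} (hc : 0 ≤ c) (h : z ⊓ 2 • c ≤ c) {n : ℕ}
    (hn : z ≤ n • c) : z ≤ c := by
  let := AddCommGroup.toDistribLattice X
  have hdisj : (z - c)⁺ ⊓ c = 0 := by
    refine le_antisymm ?_ (le_inf (posPart_nonneg _) hc)
    have hzc : (z - c) ⊓ c + c ≤ c := by rwa [inf_add, sub_add_cancel, ← two_nsmul]
    rw [posPart_def, inf_sup_right, inf_eq_left.mpr hc]
    exact sup_le (add_le_iff_nonpos_left.mp hzc) le_rfl
  have hbound : (z - c)⁺ ≤ n • c :=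
    (posPart_mono ((sub_le_self z hc).trans hn)).trans_eq (posPart_eq_self.mpr (nsmul_nonneg hc n))
  have : (z - c)⁺ = 0 := by
    rw [← inf_eq_left.mpr hbound, inf_nsmul_eq_zero (posPart_nonneg _) hc hdisj]
  rw [← sub_nonpos, ← posPart_eq_zero, this]

theorem ArchimedeanVL.inf_eq_zero_of_forall_le_posPart_sub_nsmul (hX : ArchimedeanVL X)
    {u c q : X} (hu : 0 ≤ u) (hc : 0 ≤ c) (hq : 0 ≤ q) (h : ∀ j : ℕ, c ≤ (u - j • q)⁺) :
    c ⊓ q = 0 := by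
  set w := c ⊓ q
  have hw_le (j : ℕ) : w ≤ (u - j • w)⁺ :=
    inf_le_left.trans ((h j).trans
      (posPart_mono (sub_le_sub_left (nsmul_le_nsmul_right inf_le_right j) u)))
  have hwu (j : ℕ) : j • w ≤ u := by
    induction j with
    | zero => simpa using hu
    | succ j ih =>
      calc (j + 1) • w = w + j • w := succ_nsmul' w j
        _ ≤ (u - j • w)⁺ + j • w := add_le_add_left (hw_le j) _
        _ = u := by rw [posPart_def, sup_add, sub_add_cancel, zero_add, sup_eq_left.mpr ih]
  exact le_antisymm (hX w u hwu) (le_inf hc hq)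

end LatticeOrderedGroup

section OrderConvergence

variable {X : Type*} [AddCommGroup X] [Lattice X] {ι : Type*} [Preorder ι]

def eventualBounds (x : ι → X) (l : X) : Set X :=
  {z | ∃ α₀, ∀ α, α₀ ≤ α → |x α - l| ≤ z}

/-- The eventual upper bounds of `|x α - l|`, ordered downwards, serve as the dominating net. -/
theorem OConvergesTo.of_isGLB_eventualBounds [IsDirected ι (· ≤ ·)] {x : ι → X} {l : X}
    (hne : (eventualBounds x l).Nonempty) (hglb : IsGLB (eventualBounds x l) 0) :
    OConvergesTo x l := by
  set S := eventualBounds x l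
  have hrange : Set.range (fun z : Sᵒᵈ => ((OrderDual.ofDual z : S) : X)) = S := by
    ext z
    exact ⟨fun ⟨w, hw⟩ => hw ▸ (OrderDual.ofDual w).2,
      fun hz => ⟨OrderDual.toDual ⟨z, hz⟩, rfl⟩⟩
  refine ⟨Sᵒᵈ, inferInstance, ⟨OrderDual.toDual ⟨_, hne.some_mem⟩⟩, ⟨fun a b => ?_⟩,
    fun z => ((OrderDual.ofDual z : S) : X), fun _ _ h => h, hrange.symm ▸ hglb,
    fun z => (OrderDual.ofDual z).2⟩
  obtain ⟨α₁, h₁⟩ := (OrderDual.ofDual a).2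
  obtain ⟨α₂, h₂⟩ := (OrderDual.ofDual b).2
  obtain ⟨α₀, hα₁, hα₂⟩ := directed_of (· ≤ ·) α₁ α₂
  refine ⟨OrderDual.toDual ⟨_, α₀, fun α hα =>
    le_inf (h₁ α (hα₁.trans hα)) (h₂ α (hα₂.trans hα))⟩, inf_le_left, inf_le_right⟩

end OrderConvergence

def HasDisjointSeq (X : Type*) [Lattice X] [AddCommGroup X] : Prop :=
  ∃ d : ℕ → X, (∀ n, 0 < d n) ∧ Pairwise fun n m => d n ⊓ d m = 0

section DisjointSequences

variable {X : Type*} [AddCommGroup X] [Lattice X] [IsOrderedAddMonoid X]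

theorem uoConvergesTo_nsmul_of_pairwise_inf_eq_zero (hX : ArchimedeanVL X) {d : ℕ → X}
    (hd : ∀ n, 0 ≤ d n) (hdisj : Pairwise fun n m => d n ⊓ d m = 0) {ι : Type*} [Preorder ι]
    [IsDirected ι (· ≤ ·)] (n m : ι → ℕ) (hn : ∀ N, ∃ α₀, ∀ α, α₀ ≤ α → N ≤ n α) :
    UOConvergesTo (fun α => m α • d (n α)) 0 := by
  intro u hu
  set v : ι → X := fun α => m α • d (n α) ⊓ u
  have hv (α : ι) : 0 ≤ v α := le_inf (nsmul_nonneg (hd _) _) hu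
  have habs (α : ι) : |(|m α • d (n α) - 0| ⊓ u) - 0| = v α := by
    simp only [sub_zero, abs_of_nonneg (nsmul_nonneg (hd _) _)]
    exact abs_of_nonneg (hv α)
  apply OConvergesTo.of_isGLB_eventualBounds
  · obtain ⟨α₀, -⟩ := hn 0
    exact ⟨u, α₀, fun α _ => (habs α).trans_le inf_le_right⟩
  refine ⟨fun z ⟨α₀, hz⟩ => (abs_nonneg _).trans (hz α₀ le_rfl), fun b hb => ?_⟩
  set c := b⁺
  have hc : 0 ≤ c := posPart_nonneg b
  have hc_le (z : X) (N : ℕ) (hz : ∀ α, N ≤ n α → v α ≤ z) : c ≤ z := by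
    obtain ⟨α₀, hα₀⟩ := hn N
    have hz' : z ∈ eventualBounds _ 0 :=
      ⟨α₀, fun α hα => (habs α).trans_le (hz α (hα₀ α hα))⟩
    exact sup_le (hb hz') ((hv α₀).trans (hz α₀ (hα₀ α₀ le_rfl)))
  -- `(u - i • q)⁺` bounds the tail `n α > k`, where `v α` is disjoint from `q = j • d k ⊓ u`.
  have hc_disj (k j : ℕ) : c ⊓ (j • d k ⊓ u) = 0 := by
    refine hX.inf_eq_zero_of_forall_le_posPart_sub_nsmul hu hc
      (le_inf (nsmul_nonneg (hd k) j) hu) fun i => hc_le _ (k + 1) fun α hα => ?_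
    refine le_posPart_sub_of_inf_eq_zero ?_ inf_le_right
    refine inf_eq_zero_of_le_of_le (nsmul_inf_nsmul_eq_zero (hd _) (hd k)
      (hdisj (by omega : n α ≠ k)) (m α) (j * i)) (hv α)
      (nsmul_nonneg (le_inf (nsmul_nonneg (hd k) j) hu) i) inf_le_left ?_
    rw [mul_nsmul]
    exact nsmul_le_nsmul_right inf_le_left i
  have hc_self : c ⊓ c = 0 :=
    hX.inf_eq_zero_of_forall_le_posPart_sub_nsmul hu hc hc fun i => hc_le _ 0 fun α _ =>
      le_posPart_sub_of_inf_eq_zero (inf_nsmul_eq_zero (hv α) hc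
        ((inf_comm _ _).trans (hc_disj (n α) (m α))) i) inf_le_right
  exact (le_posPart b).trans (inf_idem c ▸ hc_self).le

theorem HasDisjointSeq.exists_uoConvergesTo_not_eventuallyOrderBounded (hX : ArchimedeanVL X)
    (h : HasDisjointSeq X) : ∃ x : ULift.{v} (ℕ ×ₗ ℕ) → X,
      UOConvergesTo x 0 ∧ ¬ EventuallyOrderBounded x := by
  obtain ⟨d, hd, hdisj⟩ := h
  refine ⟨fun α => (ofLex α.down).2 • d (ofLex α.down).1,
    uoConvergesTo_nsmul_of_pairwise_inf_eq_zero hX (fun n => (hd n).le) hdisj _ _ fun N =>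
      ⟨⟨toLex (N, 0)⟩, fun α hα => ?_⟩, fun ⟨α₀, b, hb⟩ => ?_⟩
  · have := Prod.Lex.le_iff.mp (show toLex (N, 0) ≤ α.down from hα)
    simp only [ofLex_toLex] at this
    omega
  · set n := (ofLex α₀.down).1 + 1
    have hα₀ (m : ℕ) : α₀ ≤ ⟨toLex (n, m)⟩ :=
      show α₀.down ≤ toLex (n, m) from Prod.Lex.le_iff.mpr (.inl (by simp [n]))
    refine (hd n).not_ge (hX (d n) b fun m => (le_abs_self _).trans ?_)
    simpa using hb _ (hα₀ m)

end DisjointSequences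

section RealVectorLattice

variable {X : Type*} [AddCommGroup X] [Lattice X] [Module ℝ X] [PosSMulMono ℝ X]

theorem ArchimedeanVL.nonpos_of_forall_le_smul (hX : ArchimedeanVL X) {z a : X} (ha : 0 ≤ a)
    (h : ∀ ε : ℝ, 0 < ε → z ≤ ε • a) : z ≤ 0 := by
  refine hX z a fun n => ?_
  rcases n.eq_zero_or_pos with rfl | hn
  · simpa using ha
  have hn' : (0 : ℝ) < n := Nat.cast_pos.mpr hn
  calc n • z = (n : ℝ) • z := (Nat.cast_smul_eq_nsmul ℝ n z).symm
    _ ≤ (n : ℝ) • ((n : ℝ)⁻¹ • a) := smul_le_smul_of_nonneg_left (h _ (inv_pos.mpr hn')) hn'.le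
    _ = a := smul_inv_smul₀ hn'.ne' a

variable [IsOrderedAddMonoid X]

theorem smul_inf_smul_eq_zero {a b : X} (ha : 0 ≤ a) (hb : 0 ≤ b) (hab : a ⊓ b = 0) {s t : ℝ}
    (hs : 0 ≤ s) (ht : 0 ≤ t) : s • a ⊓ t • b = 0 := by
  obtain ⟨N, hN⟩ := exists_nat_ge (max s t)
  have hle {r : ℝ} (hr : r ≤ max s t) {z : X} (hz : 0 ≤ z) : r • z ≤ N • z := by
    rw [← Nat.cast_smul_eq_nsmul ℝ]
    exact smul_le_smul_of_nonneg_right (hr.trans hN) hz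
  exact inf_eq_zero_of_le_of_le (nsmul_inf_nsmul_eq_zero ha hb hab N N) (smul_nonneg hs ha)
    (smul_nonneg ht hb) (hle (le_max_left s t) ha) (hle (le_max_right s t) hb)

theorem abs_smul_of_nonneg {a : X} (ha : 0 ≤ a) (t : ℝ) : |t • a| = |t| • a := by
  rcases le_total 0 t with ht | ht
  · rw [abs_of_nonneg ht, abs_of_nonneg (smul_nonneg ht ha)]
  · rw [abs_of_nonpos ht, abs_of_nonpos (smul_nonpos_of_nonpos_of_nonneg ht ha), neg_smul]

noncomputable def atomCoeff (a x : X) : ℝ :=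
  sSup {t : ℝ | t • a ≤ x}

variable {a x : X}

theorem bddAbove_smul_le (hX : ArchimedeanVL X) (ha : 0 < a) : BddAbove {t : ℝ | t • a ≤ x} := by
  by_contra hunb
  refine ha.not_ge (hX a x fun n => ?_)
  obtain ⟨t, ht, hnt⟩ := not_bddAbove_iff.mp hunb n
  calc n • a = (n : ℝ) • a := (Nat.cast_smul_eq_nsmul ℝ n a).symm
    _ ≤ t • a := smul_le_smul_of_nonneg_right hnt.le ha.le
    _ ≤ x := ht

theorem le_atomCoeff (hX : ArchimedeanVL X) (ha : 0 < a) {t : ℝ} (ht : t • a ≤ x) :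
    t ≤ atomCoeff a x :=
  le_csSup (bddAbove_smul_le hX ha) ht

theorem atomCoeff_nonneg (hX : ArchimedeanVL X) (ha : 0 < a) (hx : 0 ≤ x) : 0 ≤ atomCoeff a x :=
  le_atomCoeff hX ha (by simpa using hx)

theorem atomCoeff_mono (hX : ArchimedeanVL X) (ha : 0 < a) (hx : 0 ≤ x) {y : X} (hxy : x ≤ y) :
    atomCoeff a x ≤ atomCoeff a y :=
  csSup_le_csSup (bddAbove_smul_le hX ha) ⟨0, by simpa using hx⟩ fun _ ht => le_trans ht hxy

theorem atomCoeff_smul_le (hX : ArchimedeanVL X) (ha : 0 < a) (hx : 0 ≤ x) :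
    atomCoeff a x • a ≤ x := by
  rw [← sub_nonpos]
  refine hX.nonpos_of_forall_le_smul ha.le fun ε hε => ?_
  obtain ⟨t, ht, hlt⟩ := exists_lt_of_lt_csSup ⟨0, by simpa using hx⟩
    (sub_lt_self (atomCoeff a x) hε)
  calc atomCoeff a x • a - x ≤ atomCoeff a x • a - t • a := sub_le_sub_left ht _
    _ ≤ atomCoeff a x • a - (atomCoeff a x - ε) • a :=
      sub_le_sub_left (smul_le_smul_of_nonneg_right hlt.le ha.le) _
    _ = ε • a := by rw [← sub_smul, sub_sub_cancel]

theorem linearIndependent_of_pairwise_inf_eq_zero {ι : Type*} {d : ι → X} (hd : ∀ i, 0 < d i)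
    (hdisj : Pairwise fun i j => d i ⊓ d j = 0) : LinearIndependent ℝ d := by
  classical
  rw [linearIndependent_iff']
  intro s g hsum i hi
  by_contra hgi
  set p := ∑ j ∈ s.erase i, |g j| • d j
  have hgi_le : |g i| • d i ≤ p := by
    have hgi_eq : g i • d i = -∑ j ∈ s.erase i, g j • d j := by
      rw [← Finset.add_sum_erase s _ hi] at hsum
      exact eq_neg_of_add_eq_zero_left hsum
    rw [← abs_smul_of_nonneg (hd i).le, hgi_eq, abs_neg, abs_le', ← Finset.sum_neg_distrib]
    exact ⟨Finset.sum_le_sum fun j _ => (abs_smul_of_nonneg (hd j).le (g j)) ▸ le_abs_self _,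
      Finset.sum_le_sum fun j _ => (abs_smul_of_nonneg (hd j).le (g j)) ▸ neg_le_abs _⟩
  have hdi_p : d i ⊓ p = 0 :=
    inf_sum_eq_zero _ (hd i).le (fun j _ => smul_nonneg (abs_nonneg _) (hd j).le) fun j hj => by
      simpa using smul_inf_smul_eq_zero (hd i).le (hd j).le (hdisj (Finset.ne_of_mem_erase hj).symm)
        zero_le_one (abs_nonneg (g j))
  have hdi : d i ⊓ |g i| • d i = 0 :=
    inf_eq_zero_of_le_of_le hdi_p (hd i).le (smul_nonneg (abs_nonneg _) (hd i).le) le_rfl hgi_le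
  have h := smul_inf_smul_eq_zero (hd i).le (smul_nonneg (abs_nonneg _) (hd i).le) hdi
    zero_le_one (inv_nonneg.mpr (abs_nonneg (g i)))
  rw [one_smul, inv_smul_smul₀ (abs_ne_zero.mpr hgi), inf_idem] at h
  exact (hd i).ne' h

theorem not_hasDisjointSeq [FiniteDimensional ℝ X] : ¬ HasDisjointSeq X := by
  rintro ⟨d, hd, hdisj⟩
  have := (linearIndependent_of_pairwise_inf_eq_zero hd hdisj).finite
  exact not_finite ℕ

def IsAtomVL (a : X) : Prop :=
  0 < a ∧ ∀ y : X, 0 ≤ y → y ≤ a → ∃ t : ℝ, y = t • a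

theorem le_smul_or_smul_le_of_forall_inf_eq_zero {y : X} (ha : 0 ≤ a)
    (hsplit : ∀ p q : X, 0 ≤ p → 0 ≤ q → p ≤ a → q ≤ a → p ⊓ q = 0 → p = 0 ∨ q = 0)
    (hy : 0 ≤ y) (hya : y ≤ a) {t : ℝ} (ht : 0 ≤ t) (ht1 : t ≤ 1) :
    y ≤ t • a ∨ t • a ≤ y := by
  have hta : 0 ≤ t • a := smul_nonneg ht ha
  have hpos : (y - t • a)⁺ ≤ a :=
    (posPart_mono (sub_le_self y hta)).trans ((posPart_eq_self.mpr hy).trans_le hya)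
  have hneg : (y - t • a)⁻ ≤ a := by
    rw [← posPart_neg, neg_sub]
    refine (posPart_mono (sub_le_self _ hy)).trans ((posPart_eq_self.mpr hta).trans_le ?_)
    simpa using smul_le_smul_of_nonneg_right ht1 ha
  rcases hsplit _ _ (posPart_nonneg _) (negPart_nonneg _) hpos hneg
    (posPart_inf_negPart_eq_zero _) with h | h
  · exact .inl (sub_nonpos.mp (posPart_eq_zero.mp h))
  · exact .inr (sub_nonneg.mp (negPart_eq_zero.mp h))

theorem isAtomVL_of_forall_inf_eq_zero (hX : ArchimedeanVL X) (ha : 0 < a)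
    (hsplit : ∀ p q : X, 0 ≤ p → 0 ≤ q → p ≤ a → q ≤ a → p ⊓ q = 0 → p = 0 ∨ q = 0) :
    IsAtomVL a := by
  refine ⟨ha, fun y hy hya => ⟨atomCoeff a y, le_antisymm ?_ (atomCoeff_smul_le hX ha hy)⟩⟩
  rw [← sub_nonpos]
  refine hX.nonpos_of_forall_le_smul ha.le fun ε hε => ?_
  have hle : y ≤ (atomCoeff a y + ε) • a := by
    by_cases h1 : atomCoeff a y + ε ≤ 1
    · refine (le_smul_or_smul_le_of_forall_inf_eq_zero ha.le hsplit hy hya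
        (by linarith [atomCoeff_nonneg hX ha hy]) h1).resolve_right fun h => ?_
      linarith [le_atomCoeff hX ha h]
    · calc y ≤ (1 : ℝ) • a := (one_smul ℝ a).symm ▸ hya
        _ ≤ (atomCoeff a y + ε) • a := smul_le_smul_of_nonneg_right (by linarith) ha.le
  calc y - atomCoeff a y • a ≤ (atomCoeff a y + ε) • a - atomCoeff a y • a := sub_le_sub_right hle _
    _ = ε • a := by rw [← sub_smul, add_sub_cancel_left]

end RealVectorLattice

theorem finiteDimensional_of_nonneg_mem_span {X : Type*} [AddCommGroup X] [Lattice X]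
    [IsOrderedAddMonoid X] [Module ℝ X] {s : Finset X}
    (hs : ∀ x : X, 0 ≤ x → x ∈ Submodule.span ℝ (s : Set X)) : FiniteDimensional ℝ X :=
  Module.finite_def.mpr ⟨s, Submodule.eq_top_iff'.mpr fun x => posPart_sub_negPart x ▸
    Submodule.sub_mem _ (hs _ (posPart_nonneg x)) (hs _ (negPart_nonneg x))⟩

section AtomicDecomposition

variable {X : Type*} [AddCommGroup X] [Lattice X] [IsOrderedAddMonoid X] [Module ℝ X]
  [PosSMulMono ℝ X]

/-- Without atoms below `x`, splitting `x` again and again into two disjoint nonzero pieces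
produces a disjoint sequence. -/
theorem exists_isAtomVL_le (hX : ArchimedeanVL X) (hno : ¬ HasDisjointSeq X) {x : X}
    (hx : 0 < x) : ∃ a, IsAtomVL a ∧ a ≤ x := by
  by_contra! hcon
  have hsplit (z : {z : X // 0 < z ∧ z ≤ x}) :
      ∃ pq : X × X, 0 < pq.1 ∧ 0 < pq.2 ∧ pq.1 ≤ z ∧ pq.2 ≤ z ∧ pq.1 ⊓ pq.2 = 0 := by
    by_contra! hz
    refine hcon z (isAtomVL_of_forall_inf_eq_zero hX z.2.1 fun p q hp hq hpz hqz hpq => ?_) z.2.2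
    by_contra! hpq0
    exact hz (p, q) (hp.lt_of_ne' hpq0.1) (hq.lt_of_ne' hpq0.2) hpz hqz hpq
  choose pq hpq using hsplit
  let z : ℕ → {z : X // 0 < z ∧ z ≤ x} := fun n =>
    Nat.rec ⟨x, hx, le_rfl⟩ (fun _ w => ⟨(pq w).2, (hpq w).2.1, (hpq w).2.2.2.1.trans w.2.2⟩) n
  have hz_anti : Antitone fun n => (z n).1 :=
    antitone_nat_of_succ_le fun n => (hpq (z n)).2.2.2.1
  have hlt {n m : ℕ} (h : n < m) : (pq (z n)).1 ⊓ (pq (z m)).1 = 0 :=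
    inf_eq_zero_of_le_of_le (hpq (z n)).2.2.2.2 (hpq _).1.le (hpq _).1.le le_rfl
      ((hpq (z m)).2.2.1.trans (hz_anti (Nat.succ_le_of_lt h)))
  refine hno ⟨fun n => (pq (z n)).1, fun n => (hpq (z n)).1, fun n m hnm => ?_⟩
  rcases hnm.lt_or_gt with h | h
  · exact hlt h
  · exact (inf_comm _ _).trans (hlt h)

variable {s : Finset X}

theorem sum_atomCoeff_smul_le (hX : ArchimedeanVL X) (hs : ∀ a ∈ s, 0 < a)
    (hdisj : (s : Set X).Pairwise fun a b => a ⊓ b = 0) {x : X} (hx : 0 ≤ x) :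
    ∑ a ∈ s, atomCoeff a x • a ≤ x :=
  sum_le_of_pairwise_inf_eq_zero s hx
    (fun a ha => smul_nonneg (atomCoeff_nonneg hX (hs a ha) hx) (hs a ha).le)
    (fun a ha => atomCoeff_smul_le hX (hs a ha) hx)
    fun a ha b hb hab => smul_inf_smul_eq_zero (hs a ha).le (hs b hb).le (hdisj ha hb hab)
      (atomCoeff_nonneg hX (hs a ha) hx) (atomCoeff_nonneg hX (hs b hb) hx)

theorem sub_sum_atomCoeff_smul_inf_eq_zero (hX : ArchimedeanVL X) (hs : ∀ a ∈ s, IsAtomVL a)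
    (hdisj : (s : Set X).Pairwise fun a b => a ⊓ b = 0) {x : X} (hx : 0 ≤ x) {b : X}
    (hb : b ∈ s) :
    (x - ∑ a ∈ s, atomCoeff a x • a) ⊓ b = 0 := by
  classical
  set r := x - ∑ a ∈ s, atomCoeff a x • a
  have hb0 := (hs b hb).1
  have hr : 0 ≤ r := sub_nonneg.mpr (sum_atomCoeff_smul_le hX (fun a ha => (hs a ha).1) hdisj hx)
  obtain ⟨μ, hμ⟩ := (hs b hb).2 (r ⊓ b) (le_inf hr hb0.le) inf_le_right
  have hsum : (atomCoeff b x + μ) • b ≤ x :=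
    calc (atomCoeff b x + μ) • b = atomCoeff b x • b + r ⊓ b := by rw [add_smul, hμ]
      _ ≤ atomCoeff b x • b + r := add_le_add_right inf_le_left _
      _ = x - ∑ a ∈ s.erase b, atomCoeff a x • a := by
        rw [show r = x - _ from rfl, ← Finset.add_sum_erase s _ hb]; abel
      _ ≤ x := sub_le_self _ (Finset.sum_nonneg fun a ha => smul_nonneg
        (atomCoeff_nonneg hX (hs a (Finset.mem_of_mem_erase ha)).1 hx)
        (hs a (Finset.mem_of_mem_erase ha)).1.le)
  have hμ0 : μ ≤ 0 := by linarith [le_atomCoeff hX hb0 hsum]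
  exact le_antisymm (hμ ▸ smul_nonpos_of_nonpos_of_nonneg hμ0 hb0.le) (le_inf hr hb0.le)

/-- The atoms are those of a maximal disjoint family of atoms, which is finite since there is no
infinite disjoint sequence. -/
theorem exists_finset_eq_sum_atomCoeff_smul (hX : ArchimedeanVL X) (hno : ¬ HasDisjointSeq X) :
    ∃ s : Finset X, (∀ a ∈ s, 0 < a) ∧ ∀ x : X, 0 ≤ x → x = ∑ a ∈ s, atomCoeff a x • a := by
  obtain ⟨M, hM⟩ := zorn_subset {M : Set X | (∀ a ∈ M, IsAtomVL a) ∧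
      M.Pairwise fun a b => a ⊓ b = 0} fun C hC hchain =>
    ⟨⋃₀ C, ⟨fun a ⟨S, hS, ha⟩ => (hC hS).1 a ha,
      (Set.pairwise_sUnion hchain.directedOn).mpr fun S hS => (hC hS).2⟩,
      fun _ => Set.subset_sUnion_of_mem⟩
  have hfin : M.Finite := by
    by_contra hinf
    let e := Set.Infinite.natEmbedding M hinf
    exact hno ⟨fun n => e n, fun n => (hM.1.1 _ (e n).2).1, fun n m hnm =>
      hM.1.2 (e n).2 (e m).2 fun h => hnm (e.injective (Subtype.ext h))⟩
  have hs : ∀ a ∈ hfin.toFinset, IsAtomVL a := fun a ha => hM.1.1 a (hfin.mem_toFinset.mp ha)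
  have hdisj : (hfin.toFinset : Set X).Pairwise fun a b => a ⊓ b = 0 := by
    rw [hfin.coe_toFinset]; exact hM.1.2
  refine ⟨hfin.toFinset, fun a ha => (hs a ha).1, fun x hx => ?_⟩
  by_contra hne
  have hr : 0 < x - ∑ a ∈ hfin.toFinset, atomCoeff a x • a :=
    (sub_nonneg.mpr (sum_atomCoeff_smul_le hX (fun a ha => (hs a ha).1) hdisj hx)).lt_of_ne'
      (sub_ne_zero.mpr hne)
  obtain ⟨a, ha, har⟩ := exists_isAtomVL_le hX hno hr
  have ha_disj (b : X) (hb : b ∈ M) : a ⊓ b = 0 :=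
    inf_eq_zero_of_le_of_le (sub_sum_atomCoeff_smul_inf_eq_zero hX hs hdisj hx
      (hfin.mem_toFinset.mpr hb)) ha.1.le (hM.1.1 b hb).1.le har le_rfl
  have haM : a ∉ M := fun h => ha.1.ne' (by simpa using ha_disj a h)
  refine haM (hM.2 ⟨Set.forall_mem_insert.mpr ⟨ha, hM.1.1⟩, hM.1.2.insert fun b hb _ =>
    ⟨ha_disj b hb, (inf_comm _ _).trans (ha_disj b hb)⟩⟩ (Set.subset_insert a M)
    (Set.mem_insert a M))

theorem exists_le_nsmul_sum (hX : ArchimedeanVL X) (hs : ∀ a ∈ s, 0 < a)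
    (hdecomp : ∀ x : X, 0 ≤ x → x = ∑ a ∈ s, atomCoeff a x • a) {z : X} (hz : 0 ≤ z) :
    ∃ n : ℕ, z ≤ n • ∑ a ∈ s, a := by
  obtain ⟨n, hn⟩ := exists_nat_ge (∑ a ∈ s, atomCoeff a z)
  refine ⟨n, ?_⟩
  rw [hdecomp z hz, Finset.smul_sum]
  refine Finset.sum_le_sum fun a ha => ?_
  rw [← Nat.cast_smul_eq_nsmul ℝ]
  refine smul_le_smul_of_nonneg_right (le_trans ?_ hn) (hs a ha).le
  exact Finset.single_le_sum (fun b hb => atomCoeff_nonneg hX (hs b hb) hz) ha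

theorem exists_le_smul_sum_of_isGLB (hX : ArchimedeanVL X) (hs : ∀ a ∈ s, 0 < a)
    (hdecomp : ∀ x : X, 0 ≤ x → x = ∑ a ∈ s, atomCoeff a x • a) {Γ : Type*} [Preorder Γ]
    [Nonempty Γ] [IsDirected Γ (· ≤ ·)] {y : Γ → X} (hy : Antitone y)
    (hglb : IsGLB (Set.range y) 0) {ε : ℝ} (hε : 0 < ε) : ∃ γ, y γ ≤ ε • ∑ a ∈ s, a := by
  classical
  have hy0 (γ : Γ) : 0 ≤ y γ := hglb.1 ⟨γ, rfl⟩
  have hsmall (a : X) (ha : a ∈ s) : ∃ γ, atomCoeff a (y γ) < ε := by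
    by_contra! h
    have hεa : ε • a ≤ 0 := hglb.2 <| Set.forall_mem_range.mpr fun γ =>
      (smul_le_smul_of_nonneg_right (h γ) (hs a ha).le).trans
        (atomCoeff_smul_le hX (hs a ha) (hy0 γ))
    exact (hs a ha).not_ge
      (by simpa [hε.ne'] using smul_le_smul_of_nonneg_left hεa (inv_nonneg.mpr hε.le))
  choose γ hγ using hsmall
  obtain ⟨γ₀, hγ₀⟩ := Finset.exists_le (s.attach.image fun a : {a // a ∈ s} => γ a.1 a.2)
  refine ⟨γ₀, ?_⟩
  rw [hdecomp _ (hy0 γ₀), Finset.smul_sum]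
  refine Finset.sum_le_sum fun a ha => smul_le_smul_of_nonneg_right ?_ (hs a ha).le
  have hγa : γ a ha ≤ γ₀ := hγ₀ _ (Finset.mem_image_of_mem _ (Finset.mem_attach _ ⟨a, ha⟩))
  exact ((atomCoeff_mono hX (hs a ha) (hy0 γ₀) (hy hγa)).trans_lt (hγ a ha)).le

theorem eventuallyOrderBounded_of_uoConvergesTo (hX : ArchimedeanVL X) (hs : ∀ a ∈ s, 0 < a)
    (hdecomp : ∀ x : X, 0 ≤ x → x = ∑ a ∈ s, atomCoeff a x • a) {ι : Type*} [Preorder ι]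
    {x : ι → X} {l : X} (hx : UOConvergesTo x l) : EventuallyOrderBounded x := by
  set e := ∑ a ∈ s, a
  set c := (2⁻¹ : ℝ) • e
  have he : 0 ≤ e := Finset.sum_nonneg fun a ha => (hs a ha).le
  have hc : 0 ≤ c := smul_nonneg (by norm_num) he
  have hce : 2 • c = e := by rw [two_nsmul, ← add_smul]; norm_num
  obtain ⟨Γ, _, _, _, y, hy, hglb, htail⟩ := hx e he
  obtain ⟨γ, hγ⟩ := exists_le_smul_sum_of_isGLB hX hs hdecomp hy hglb (by norm_num : (0 : ℝ) < 2⁻¹)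
  obtain ⟨α₀, hα₀⟩ := htail γ
  refine ⟨α₀, c + |l|, fun α hα => ?_⟩
  obtain ⟨m, hm⟩ := exists_le_nsmul_sum hX hs hdecomp (abs_nonneg (x α - l))
  have hinf : |x α - l| ⊓ 2 • c ≤ c := by
    have h := hα₀ α hα
    rw [sub_zero, abs_of_nonneg (le_inf (abs_nonneg _) he), ← hce] at h
    exact h.trans hγ
  have hxl : |x α - l| ≤ c := le_of_inf_two_nsmul_le hc hinf (n := m * 2) (by rwa [mul_nsmul', hce])
  calc |x α| = |(x α - l) + l| := by rw [sub_add_cancel]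
    _ ≤ |x α - l| + |l| := abs_add_le _ _
    _ ≤ c + |l| := add_le_add_left hxl _

end AtomicDecomposition

/-- An Archimedean vector lattice `X` over `ℝ` is finite-dimensional iff every net in `X`
that is uo-convergent to some element of `X` is eventually order bounded in `X`. -/
theorem finiteDimensional_iff_uoConvergent_eventuallyOrderBounded
    {X : Type u} [AddCommGroup X] [Lattice X]
    [CovariantClass X X (· + ·) (· ≤ ·)] [Module ℝ X] [PosSMulMono ℝ X]
    (hArch : ArchimedeanVL X) :
    FiniteDimensional ℝ X ↔
      ∀ (ι : Type v) (_ : Preorder ι) (_ : Nonempty ι),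
        IsDirected ι (· ≤ ·) →
        ∀ (x : ι → X) (l : X), UOConvergesTo x l → EventuallyOrderBounded x := by
  have : IsOrderedAddMonoid X :=
    ⟨fun _ _ h c => add_le_add_left h c, fun _ _ h c => add_le_add_right h c⟩
  constructor
  · intro _ ι _ _ _ x l hx
    obtain ⟨s, hs, hdecomp⟩ := exists_finset_eq_sum_atomCoeff_smul hArch not_hasDisjointSeq
    exact eventuallyOrderBounded_of_uoConvergesTo hArch hs hdecomp hx
  · intro h
    obtain ⟨s, -, hdecomp⟩ := exists_finset_eq_sum_atomCoeff_smul hArch fun hseq => by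
      obtain ⟨x, hx, hunb⟩ := hseq.exists_uoConvergesTo_not_eventuallyOrderBounded hArch
      exact hunb (h _ inferInstance inferInstance inferInstance x 0 hx)
    exact finiteDimensional_of_nonneg_mem_span fun x hx => hdecomp x hx ▸ Submodule.sum_mem _
      fun a ha => Submodule.smul_mem _ _ (Submodule.subset_span ha)
end

section
/- Let X be an Archimedean vector lattice and let (e_n)_{n∈ℕ} be a sequence of pairwise disjoint positive nonzero elements of X (i.e., e_n > 0 for all n and e_n ∧ e_m = 0 whenever n ≠ m). Define the net x_{(n,m)} = (max(n,m))·e_{min(n,m)} indexed by ℕ² with the coordinatewise order. Then this net is not eventually order bounded in X: for every y ∈ X and every (n₀,m₀) ∈ ℕ² there exists (n,m) ≥ (n₀,m₀) with x_{(n,m)} ≤ y failing. -/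
/-- Given pairwise disjoint positive nonzero elements `e n` of an Archimedean vector
lattice `X`, the net `x_{(n,m)} = (n ⊔ m) • e (n ⊓ m)` is not eventually order bounded
in `X`. -/
theorem net_of_disjoint_sequence_not_eventuallyOrderBounded
    {X : Type u} [AddCommGroup X] [Lattice X]
    [CovariantClass X X (· + ·) (· ≤ ·)] [Module ℝ X] [PosSMulMono ℝ X]
    (hArch : ArchimedeanVL X)
    (e : ℕ → X) (hpos : ∀ n, 0 < e n)
    (hdisj : ∀ n m, n ≠ m → e n ⊓ e m = 0) :
    ∀ (y : X) (n₀ m₀ : ℕ), ∃ n m : ℕ, n₀ ≤ n ∧ m₀ ≤ m ∧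
      ¬ ((max n m : ℕ) • e (min n m) ≤ y) := by
  intro y n₀ m₀
  by_contra h
  push_neg at h
  set N := max n₀ m₀ with hN
  have key : ∀ k : ℕ, k • e N ≤ y := by
    intro k
    have hNn₀ : n₀ ≤ N := le_max_left _ _
    have hm₀ : m₀ ≤ max k N := le_trans (le_max_right n₀ m₀) (le_max_right k N)
    have h1 := h N (max k N) hNn₀ hm₀
    have hle : N ≤ max k N := le_max_right _ _
    rw [min_eq_left hle, max_eq_right hle] at h1
    calc k • e N ≤ (max k N) • e N :=
          nsmul_le_nsmul_left (hpos N).le (le_max_left _ _)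
      _ ≤ y := h1
  exact absurd (hArch (e N) y key) ((hpos N).not_ge)
end

section
/- Let X be an Archimedean vector lattice and let (e_n)_{n∈ℕ} be a sequence of pairwise disjoint positive nonzero elements of X. Define the net x_{(n,m)} = (max(n,m))·e_{min(n,m)} indexed by ℕ² with the coordinatewise order. Then this net is uo-convergent to 0 in X: for every y ∈ X with y ≥ 0, the net x_{(n,m)} ∧ y o-converges to 0 in X. -/
section Aux

variable {X : Type u} [AddCommGroup X] [Lattice X]
  [CovariantClass X X (· + ·) (· ≤ ·)]

/-- For nonnegative elements, `(a + b) ⊓ c ≤ a ⊓ c + b ⊓ c`. -/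
lemma aux_add_inf_le {a b c : X} (ha : 0 ≤ a) (hb : 0 ≤ b) (hc : 0 ≤ c) :
    (a + b) ⊓ c ≤ a ⊓ c + b ⊓ c := by
  have h : a ⊓ c + b ⊓ c = ((a + b) ⊓ (a + c)) ⊓ ((c + b) ⊓ (c + c)) := by
    rw [inf_add a c (b ⊓ c), add_inf b c a, add_inf b c c]
  rw [h]
  refine le_inf (le_inf inf_le_left ?_) (le_inf ?_ ?_)
  · exact le_trans inf_le_right (le_add_of_nonneg_left ha)
  · exact le_trans inf_le_right (le_add_of_nonneg_right hb)
  · exact le_trans inf_le_right (le_add_of_nonneg_left hc)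

/-- Disjointness is preserved by natural multiples. -/
lemma aux_nsmul_disjoint {a b : X} (ha : 0 ≤ a) (hb : 0 ≤ b)
    (hab : a ⊓ b = 0) : ∀ n : ℕ, (n • a) ⊓ b = 0 := by
  intro n
  induction n with
  | zero => simpa using inf_eq_left.mpr hb
  | succ n ih =>
    have h1 : 0 ≤ (n + 1) • a ⊓ b := le_inf (nsmul_nonneg ha _) hb
    have h2 : (n + 1) • a ⊓ b ≤ (n • a) ⊓ b + a ⊓ b := by
      rw [succ_nsmul]
      exact aux_add_inf_le (nsmul_nonneg ha n) ha hb
    rw [ih, hab, add_zero] at h2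
    exact le_antisymm h2 h1

lemma aux_nsmul_disjoint' {a b : X} (ha : 0 ≤ a) (hb : 0 ≤ b)
    (hab : a ⊓ b = 0) (n m : ℕ) : (n • a) ⊓ (m • b) = 0 := by
  have h1 : (n • a) ⊓ b = 0 := aux_nsmul_disjoint ha hb hab n
  have h2 : b ⊓ (n • a) = 0 := by rwa [inf_comm] at h1
  have h3 : (m • b) ⊓ (n • a) = 0 :=
    aux_nsmul_disjoint hb (nsmul_nonneg ha n) h2 m
  rwa [inf_comm] at h3

/-- Disjoint elements below `y` have sum below `y`. -/
lemma aux_disjoint_add_le {u v y : X} (huv : u ⊓ v = 0)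
    (hu : u ≤ y) (hv : v ≤ y) : u + v ≤ y := by
  have h := inf_add_sup u v
  rw [huv, zero_add] at h
  rw [← h]
  exact sup_le hu hv

end Aux

/-- Given pairwise disjoint positive nonzero elements `e n` of an Archimedean vector
lattice `X`, the net `x_{(n,m)} = (n ⊔ m) • e (n ⊓ m)` (indexed by `ℕ²` with the
coordinatewise order) is uo-convergent to `0`: for every `y ≥ 0` the net
`x_{(n,m)} ⊓ y` o-converges to `0`. -/
theorem net_of_disjoint_sequence_uoConvergesTo_zero
    {X : Type u} [AddCommGroup X] [Lattice X]
    [CovariantClass X X (· + ·) (· ≤ ·)] [Module ℝ X] [PosSMulMono ℝ X]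
    (hArch : ArchimedeanVL X)
    (e : ℕ → X) (hpos : ∀ n, 0 < e n)
    (hdisj : ∀ n m, n ≠ m → e n ⊓ e m = 0) :
    ∀ y : X, 0 ≤ y →
      OConvergesTo
        (fun p : ℕ × ℕ => ((max p.1 p.2 : ℕ) • e (min p.1 p.2)) ⊓ y) (0 : X) := by
  intro y hy
  -- the partial suprema
  set s : ℕ → X := fun k =>
    (Finset.range (k+1)).sup' Finset.nonempty_range_add_one (fun j => (k • e j) ⊓ y) with hs
  have hterm_nonneg : ∀ k j : ℕ, 0 ≤ (k • e j) ⊓ y :=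
    fun k j => le_inf (nsmul_nonneg (hpos j).le k) hy
  have hs_nonneg : ∀ k, 0 ≤ s k := by
    intro k
    exact le_trans (hterm_nonneg k 0)
      (Finset.le_sup' (fun j => (k • e j) ⊓ y) (Finset.mem_range.mpr (Nat.succ_pos k)))
  have hs_le_y : ∀ k, s k ≤ y := by
    intro k
    exact Finset.sup'_le _ _ fun j _ => inf_le_right
  have hs_mono : Monotone s := by
    intro k l hkl
    refine Finset.sup'_le _ _ fun j hj => ?_
    have hj' : j ∈ Finset.range (l+1) := by
      rw [Finset.mem_range] at hj ⊢; omega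
    refine le_trans ?_ (Finset.le_sup' (fun j => (l • e j) ⊓ y) hj')
    exact inf_le_inf_right y (nsmul_le_nsmul_left (hpos j).le hkl)
  -- key disjointness: a tail element is disjoint from `s k`
  have hkey : ∀ (k M j : ℕ), k < j → ((M • e j) ⊓ y) + s k ≤ y := by
    intro k M j hkj
    have h1 : s k ≤ y - ((M • e j) ⊓ y) := by
      refine Finset.sup'_le _ _ fun i hi => ?_
      rw [Finset.mem_range] at hi
      have hij : i ≠ j := by omega
      have hd : ((k • e i) ⊓ y) ⊓ ((M • e j) ⊓ y) = 0 := by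
        have h0 : ((k • e i) ⊓ y) ⊓ ((M • e j) ⊓ y) ≤ (k • e i) ⊓ (M • e j) :=
          inf_le_inf inf_le_left inf_le_left
        rw [aux_nsmul_disjoint' (hpos i).le (hpos j).le (hdisj i j hij) k M] at h0
        exact le_antisymm h0 (le_inf (hterm_nonneg k i) (hterm_nonneg M j))
      rw [le_sub_iff_add_le]
      exact aux_disjoint_add_le hd inf_le_right inf_le_right
    exact add_le_of_le_sub_left h1
  -- the directed set
  refine ⟨ℕ × {d : X // 0 ≤ d ∧ d ≤ y ∧ ∀ j, d ⊓ e j = 0}, inferInstance,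
    ⟨(0, ⟨0, le_refl 0, hy, fun j => inf_eq_left.mpr (hpos j).le⟩)⟩, ?_, ?_⟩
  · -- directedness
    constructor
    rintro ⟨k, d, hd0, hdy, hde⟩ ⟨k', d', hd0', hdy', hde'⟩
    refine ⟨(max k k', ⟨d ⊔ d', le_sup_of_le_left hd0, sup_le hdy hdy', fun j => ?_⟩),
      ⟨le_max_left _ _, le_sup_left⟩, ⟨le_max_right _ _, le_sup_right⟩⟩
    have h1 : d ⊔ d' ≤ d + d' :=
      sup_le (le_add_of_nonneg_right hd0') (le_add_of_nonneg_left hd0)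
    have h2 : (d ⊔ d') ⊓ e j ≤ (d + d') ⊓ e j := inf_le_inf_right _ h1
    have h3 : (d + d') ⊓ e j ≤ d ⊓ e j + d' ⊓ e j := aux_add_inf_le hd0 hd0' (hpos j).le
    rw [hde j, hde' j, add_zero] at h3
    exact le_antisymm (le_trans h2 h3) (le_inf (le_sup_of_le_left hd0) (hpos j).le)
  · -- the dominating net
    refine ⟨fun γ => y - (s γ.1 ⊔ γ.2.1), ?_, ?_, ?_⟩
    · -- antitone
      rintro ⟨k, d⟩ ⟨k', d'⟩ ⟨hk, hd⟩
      exact sub_le_sub_left (sup_le_sup (hs_mono hk) hd) y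
    · -- IsGLB
      have hlb : ∀ γ : ℕ × {d : X // 0 ≤ d ∧ d ≤ y ∧ ∀ j, d ⊓ e j = 0},
          (0 : X) ≤ y - (s γ.1 ⊔ γ.2.1) := by
        rintro ⟨k, d, hd0, hdy, hde⟩
        rw [sub_nonneg]
        exact sup_le (hs_le_y k) hdy
      constructor
      · rintro _ ⟨γ, rfl⟩
        exact hlb γ
      · -- any lower bound is ≤ 0
        intro c hc
        have hc' : ∀ γ : ℕ × {d : X // 0 ≤ d ∧ d ≤ y ∧ ∀ j, d ⊓ e j = 0},
            c ⊔ 0 ≤ y - (s γ.1 ⊔ γ.2.1) :=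
          fun γ => sup_le (hc (Set.mem_range_self γ)) (hlb γ)
        set c' : X := c ⊔ 0 with hc'def
        have hc'0 : 0 ≤ c' := le_sup_right
        -- c' ≤ y - s k for all k
        have hcs : ∀ k, c' ≤ y - s k := by
          intro k
          have := hc' (k, ⟨0, le_refl 0, hy, fun j => inf_eq_left.mpr (hpos j).le⟩)
          simpa [sup_eq_left.mpr (hs_nonneg k)] using this
        -- Step A : c' is disjoint from every e j
        have hA : ∀ j, c' ⊓ e j = 0 := by
          intro j
          set t : X := c' ⊓ e j with ht
          have ht0 : 0 ≤ t := le_inf hc'0 (hpos j).le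
          have hn : ∀ n : ℕ, n • t ≤ y := by
            intro n
            induction n with
            | zero => simpa using hy
            | succ n ih =>
              set k : ℕ := max n j with hk
              have h1 : c' ≤ y - ((k • e j) ⊓ y) := by
                refine le_trans (hcs k) (sub_le_sub_left ?_ y)
                exact Finset.le_sup' (fun i => (k • e i) ⊓ y)
                  (Finset.mem_range.mpr (by omega))
              have h2 : n • t ≤ (k • e j) ⊓ y := by
                refine le_inf ?_ ih
                calc n • t ≤ n • e j := nsmul_le_nsmul_right (inf_le_right) n
                  _ ≤ k • e j := nsmul_le_nsmul_left (hpos j).le (le_max_left n j)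
              calc (n+1) • t = t + n • t := by rw [succ_nsmul, add_comm]
                _ ≤ (y - ((k • e j) ⊓ y)) + ((k • e j) ⊓ y) :=
                    add_le_add (le_trans inf_le_left h1) h2
                _ = y := sub_add_cancel y _
          have := hArch t y hn
          exact le_antisymm this ht0
        -- Step B : n • c' ≤ y for all n
        have hB : ∀ n : ℕ, n • c' ≤ y := by
          intro n
          induction n with
          | zero => simpa using hy
          | succ n ih =>
            have hd : ∀ j, (n • c') ⊓ e j = 0 :=
              fun j => aux_nsmul_disjoint hc'0 (hpos j).le (hA j) n
            have h1 := hc' (0, ⟨n • c', nsmul_nonneg hc'0 n, ih, hd⟩)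
            have h2 : c' ≤ y - n • c' :=
              le_trans h1 (sub_le_sub_left le_sup_right y)
            rw [succ_nsmul, add_comm]
            rw [le_sub_iff_add_le] at h2
            exact h2
        exact le_trans le_sup_left (hArch c' y hB)
    · -- tail domination
      rintro ⟨k, d, hd0, hdy, hde⟩
      refine ⟨(k+1, k+1), ?_⟩
      rintro ⟨n, m⟩ ⟨hn, hm⟩
      simp only [sub_zero]
      set j : ℕ := min n m with hj
      set M : ℕ := max n m with hM
      have hjk : k < j := by simp only [hj]; omega
      have hx0 : 0 ≤ (M • e j) ⊓ y := hterm_nonneg M j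
      rw [abs_of_nonneg hx0]
      have h1 : ((M • e j) ⊓ y) + s k ≤ y := hkey k M j hjk
      have h2 : ((M • e j) ⊓ y) + d ≤ y := by
        have hdx : ((M • e j) ⊓ y) ⊓ d = 0 := by
          have h0 : ((M • e j) ⊓ y) ⊓ d ≤ (M • e j) ⊓ d :=
            inf_le_inf_right d inf_le_left
          have h0' : (M • e j) ⊓ d = 0 := by
            have := aux_nsmul_disjoint (hpos j).le hd0
              (by rw [inf_comm]; exact hde j) M
            exact this
          rw [h0'] at h0
          exact le_antisymm h0 (le_inf hx0 hd0)
        exact aux_disjoint_add_le hdx inf_le_right hdy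
      have h1' : s k ≤ y - ((M • e j) ⊓ y) :=
        le_sub_iff_add_le.mpr (by rw [add_comm]; exact h1)
      have h2' : d ≤ y - ((M • e j) ⊓ y) :=
        le_sub_iff_add_le.mpr (by rw [add_comm]; exact h2)
      exact le_sub_comm.mp (sup_le h1' h2')
end

section
/- Let c₀₀ denote the vector lattice of finitely supported real sequences with the pointwise order, and define the net (x_{(n,m)})_{(n,m)∈ℕ²} in c₀₀ by x_{(n,m)}(k) = max(n,m) if k = min(n,m) and x_{(n,m)}(k) = 0 otherwise, where ℕ² carries the coordinatewise order. Then this net is uo-convergent to 0 in c₀₀: for every y ∈ c₀₀ with y ≥ 0, the net |x_{(n,m)}| ∧ y o-converges to 0 in c₀₀. -/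
/-- The net `x_{(n,m)} = (n ⊔ m) · 𝟙_{{n ⊓ m}}` in `c₀₀` (finitely supported real
sequences, here `ℕ →₀ ℝ`, with the pointwise order) is uo-convergent to `0`. -/
theorem uoConvergesTo_zero_net_in_c00 :
    UOConvergesTo
      (fun p : ℕ × ℕ => Finsupp.single (min p.1 p.2) (max p.1 p.2 : ℝ))
      (0 : ℕ →₀ ℝ) := by
  intro y hy
  refine ⟨PUnit, inferInstance, inferInstance, inferInstance, fun _ => 0,
    antitone_const, ?_, fun _ => ?_⟩
  · simp [Set.range_const, isGLB_singleton]
  · set N := (y.support.sup id) + 1 with hN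
    refine ⟨(N, N), fun α hα => ?_⟩
    have hmin : N ≤ min α.1 α.2 := le_min hα.1 hα.2
    have hys : y (min α.1 α.2) = 0 := by
      by_contra h
      have := Finset.le_sup (f := id) (Finsupp.mem_support_iff.mpr h)
      simp only [id] at this
      omega
    have h0 : (|Finsupp.single (min α.1 α.2) (max α.1 α.2 : ℝ)| ⊓ y) = 0 := by
      rw [abs_of_nonneg (Finsupp.single_nonneg.mpr (by positivity))]
      ext k
      simp only [Finsupp.inf_apply, Finsupp.coe_zero, Pi.zero_apply, Finsupp.single_apply]
      rcases eq_or_ne (min α.1 α.2) k with rfl | hk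
      · simp [hys]
      · have hyk : (0:ℝ) ≤ y k := by simpa using Finsupp.le_def.mp hy k
        simp [hk, inf_eq_left.mpr hyk]
    simp only [sub_zero, h0, abs_zero, le_refl]
end
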